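/- arXiv:1808.10443 — 2 statements merged into one kernel-verified Lean document; each statement's English description precedes it below -/
import Mathlib

section
/- For even n ≥ 2 and 0 ≤ k ≤ n − 1, the minimum number of edges of a graph on n vertices with matching preclusion number exactly k equals nk/2. -/
open SimpleGraph

/-- An almost-perfect matching: a matching covering all vertices except exactly one. -/
def SimpleGraph.Subgraph.IsAlmostPerfectMatching {V : Type*} {G : SimpleGraph V}
    (M : G.Subgraph) : Prop :=
  M.IsMatching ∧ ∃ v : V, M.verts = {v}ᶜ

/-- `G` has a perfect matching or an almost-perfect matching. -/
def SimpleGraph.HasGoodMatching {V : Type*} (G : SimpleGraph V) : Prop :=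
  (∃ M : G.Subgraph, M.IsPerfectMatching) ∨ (∃ M : G.Subgraph, M.IsAlmostPerfectMatching)

/-- The matching preclusion number of `G`. -/
noncomputable def SimpleGraph.mp {V : Type*} [Fintype V] (G : SimpleGraph V) : ℕ :=
  sInf { k | ∃ F : Finset (Sym2 V), ↑F ⊆ G.edgeSet ∧ F.card = k ∧
    ¬ (G.deleteEdges ↑F).HasGoodMatching }

/-!
On an even number of vertices no almost-perfect matching exists, so deleting the edges at a
vertex precludes all good matchings: `mp G ≤ δ(G)`, and summing degrees gives
`n · mp G ≤ 2 |E(G)|`. Conversely, the round-robin `1`-factorization of `K_n` (vertices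
`ℤ/(n-1) ∪ {∞}`, the `r`-th matching pairing `∞ ↔ r` and `x ↔ 2r - x`) yields, for every
`k ≤ n - 1`, a `k`-regular graph with `nk/2` edges that is the union of `k` edge-disjoint perfect
matchings. Fewer than `k` deleted edges miss one of these matchings entirely, so its matching
preclusion number is exactly `k`.
-/

open Finset Function

namespace SimpleGraph

variable {V : Type*} {G : SimpleGraph V}

theorem hasGoodMatching_deleteEdges_of_card_lt {ι : Type*} [Fintype ι] {M : ι → G.Subgraph}
    (hM : ∀ i, (M i).IsPerfectMatching) (hdisj : Pairwise (Disjoint on fun i => (M i).edgeSet))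
    {F : Finset (Sym2 V)} (hF : #F < Fintype.card ι) : (G.deleteEdges ↑F).HasGoodMatching := by
  obtain ⟨i, hi⟩ : ∃ i, Disjoint (M i).edgeSet ↑F := by
    by_contra! h
    choose e he using fun i => Set.not_disjoint_iff.mp (h i)
    have hinj : Injective fun i => (⟨e i, (he i).2⟩ : F) := fun i j hij => by
      have hij : e i = e j := congrArg Subtype.val hij
      exact hdisj.eq (Set.not_disjoint_iff.mpr ⟨e i, (he i).1, hij ▸ (he j).1⟩)
    have := Fintype.card_le_of_injective _ hinj
    simp only [Fintype.card_coe] at this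
    omega
  refine .inl ⟨(G.deleteEdges ↑F).toSubgraph (M i).spanningCoe fun x y hxy => ?_,
    (Subgraph.IsPerfectMatching.toSubgraph_iff _).mpr (hM i)⟩
  exact deleteEdges_adj.mpr
    ⟨(M i).adj_sub hxy, hi.notMem_of_mem_left (Subgraph.mem_edgeSet.mpr hxy)⟩

variable [Fintype V]

theorem Subgraph.IsAlmostPerfectMatching.odd_card {M : G.Subgraph}
    (hM : M.IsAlmostPerfectMatching) : Odd (Fintype.card V) := by
  classical
  obtain ⟨hmatch, v, hv⟩ := hM
  have : Fintype M.verts := Fintype.ofFinite _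
  have hcard : #M.verts.toFinset = Fintype.card V - 1 := by
    simp [hv, Set.toFinset_compl, Finset.card_compl]
  obtain ⟨t, ht⟩ := hcard ▸ hmatch.even_card
  have : 0 < Fintype.card V := Fintype.card_pos_iff.mpr ⟨v⟩
  exact ⟨t, by omega⟩

theorem not_hasGoodMatching_of_forall_not_adj (hV : Even (Fintype.card V)) {v : V}
    (hv : ∀ w, ¬ G.Adj v w) : ¬ G.HasGoodMatching := by
  rintro (⟨M, hM⟩ | ⟨M, hM⟩)
  · obtain ⟨w, hw, -⟩ := hM.1 (hM.2 v)
    exact hv w (M.adj_sub hw)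
  · exact Nat.not_odd_iff_even.mpr hV hM.odd_card

theorem not_hasGoodMatching_deleteIncidenceSet (hV : Even (Fintype.card V)) (v : V) :
    ¬ (G.deleteIncidenceSet v).HasGoodMatching :=
  not_hasGoodMatching_of_forall_not_adj hV fun _ h => (deleteIncidenceSet_adj.mp h).2.1 rfl

theorem not_hasGoodMatching_deleteEdges_incidenceFinset [DecidableEq V] [DecidableRel G.Adj]
    (hV : Even (Fintype.card V)) (v : V) :
    ¬ (G.deleteEdges ↑(G.incidenceFinset v)).HasGoodMatching := by
  rw [coe_incidenceFinset]
  exact not_hasGoodMatching_deleteIncidenceSet hV v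

theorem mp_le_card {F : Finset (Sym2 V)} (hF : ↑F ⊆ G.edgeSet)
    (h : ¬ (G.deleteEdges ↑F).HasGoodMatching) : G.mp ≤ #F :=
  Nat.sInf_le ⟨F, hF, rfl, h⟩

theorem mp_le_degree [DecidableEq V] [DecidableRel G.Adj] (hV : Even (Fintype.card V)) (v : V) :
    G.mp ≤ G.degree v := by
  rw [← card_incidenceFinset_eq_degree]
  exact mp_le_card (by simpa using G.incidenceSet_subset v)
    (not_hasGoodMatching_deleteEdges_incidenceFinset hV v)

theorem card_mul_mp_le [DecidableEq V] [DecidableRel G.Adj] (hV : Even (Fintype.card V)) :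
    Fintype.card V * G.mp ≤ 2 * #G.edgeFinset := by
  rw [← sum_degrees_eq_twice_card_edges, ← smul_eq_mul, ← Finset.card_univ, ← sum_const]
  exact sum_le_sum fun v _ => mp_le_degree hV v

theorem le_mp_of_forall_card_lt [Nonempty V] (hV : Even (Fintype.card V)) {k : ℕ}
    (h : ∀ F : Finset (Sym2 V), #F < k → (G.deleteEdges ↑F).HasGoodMatching) :
    k ≤ G.mp := by
  classical
  obtain ⟨v⟩ := ‹Nonempty V›
  have hne : { k | ∃ F : Finset (Sym2 V), ↑F ⊆ G.edgeSet ∧ #F = k ∧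
      ¬ (G.deleteEdges ↑F).HasGoodMatching }.Nonempty := ⟨_, G.incidenceFinset v,
    by simpa using G.incidenceSet_subset v, rfl,
    not_hasGoodMatching_deleteEdges_incidenceFinset hV v⟩
  obtain ⟨F, -, hF, hbad⟩ := Nat.sInf_mem hne
  by_contra! hlt
  exact hbad (h F (hF.trans_lt hlt))

theorem mp_eq_of_isRegularOfDegree [Nonempty V] [DecidableRel G.Adj]
    (hV : Even (Fintype.card V)) {k : ℕ} (hreg : G.IsRegularOfDegree k)
    (h : ∀ F : Finset (Sym2 V), #F < k → (G.deleteEdges ↑F).HasGoodMatching) : G.mp = k := by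
  classical
  obtain ⟨v⟩ := ‹Nonempty V›
  exact le_antisymm (hreg.degree_eq v ▸ mp_le_degree hV v) (le_mp_of_forall_card_lt hV h)

end SimpleGraph

theorem ZMod.isUnit_two_of_odd {m : ℕ} (hm : Odd m) : IsUnit (2 : ZMod m) := by
  exact_mod_cast (ZMod.isUnit_iff_coprime 2 m).mpr (Nat.coprime_two_left.mpr hm)

/-- Edge-disjoint perfect matchings of the complete graph on `V`, the `i`-th one pairing `x` with
`toFun i x`. -/
structure PartialOneFactorization (ι V : Type*) where
  toFun : ι → V → V
  involutive : ∀ i, Involutive (toFun i)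
  ne_self : ∀ i x, toFun i x ≠ x
  injective_index : ∀ x, Injective (toFun · x)

namespace PartialOneFactorization

variable {ι κ V W : Type*} (σ : PartialOneFactorization ι V)

def graph : SimpleGraph V where
  Adj x y := ∃ i, σ.toFun i x = y
  symm := ⟨fun _ _ ⟨i, h⟩ => ⟨i, h ▸ σ.involutive i _⟩⟩
  loopless := ⟨fun _ ⟨i, h⟩ => σ.ne_self i _ h⟩

def matching (i : ι) : σ.graph.Subgraph where
  verts := Set.univ
  Adj x y := σ.toFun i x = y
  adj_sub h := ⟨i, h⟩
  edge_vert _ := Set.mem_univ _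
  symm := ⟨fun _ _ h => h ▸ σ.involutive i _⟩

theorem isPerfectMatching_matching (i : ι) : (σ.matching i).IsPerfectMatching :=
  Subgraph.isPerfectMatching_iff.mpr fun v =>
    ⟨σ.toFun i v, rfl, fun _ (h : σ.toFun i v = _) => h.symm⟩

theorem pairwise_disjoint_edgeSet_matching :
    Pairwise (Disjoint on fun i => (σ.matching i).edgeSet) := by
  intro i j hij
  refine Set.disjoint_left.mpr fun e => ?_
  induction e using Sym2.ind with
  | _ x y =>
    intro (hi : σ.toFun i x = y) (hj : σ.toFun j x = y)
    exact hij (σ.injective_index x (hi.trans hj.symm))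

theorem isRegularOfDegree_graph [Fintype V] [Fintype ι] [DecidableRel σ.graph.Adj] :
    σ.graph.IsRegularOfDegree (Fintype.card ι) := by
  classical
  intro v
  have : σ.graph.neighborFinset v = univ.image (σ.toFun · v) := by
    ext w
    simp only [mem_neighborFinset, mem_image, mem_univ, true_and]
    rfl
  rw [← card_neighborFinset_eq_degree, this, card_image_of_injective _ (σ.injective_index v),
    card_univ]

theorem mp_graph [Fintype V] [Nonempty V] [Fintype ι] (hV : Even (Fintype.card V)) :
    σ.graph.mp = Fintype.card ι := by
  classical
  exact mp_eq_of_isRegularOfDegree hV σ.isRegularOfDegree_graph fun _ hF =>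
    hasGoodMatching_deleteEdges_of_card_lt σ.isPerfectMatching_matching
      σ.pairwise_disjoint_edgeSet_matching hF

theorem two_mul_card_edgeFinset_graph [Fintype V] [DecidableEq V] [Fintype ι]
    [DecidableRel σ.graph.Adj] :
    2 * #σ.graph.edgeFinset = Fintype.card V * Fintype.card ι := by
  simp [← sum_degrees_eq_twice_card_edges, σ.isRegularOfDegree_graph.degree_eq]

def map (e : V ≃ W) : PartialOneFactorization ι W where
  toFun i := e ∘ σ.toFun i ∘ e.symm
  involutive i x := by simp [σ.involutive i _]
  ne_self i x h := σ.ne_self i (e.symm x) (e.symm_apply_eq.mpr h.symm).symm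
  injective_index x _ _ h := σ.injective_index _ (e.injective h)

def comp (f : κ ↪ ι) : PartialOneFactorization κ V where
  toFun := σ.toFun ∘ f
  involutive i := σ.involutive (f i)
  ne_self i := σ.ne_self (f i)
  injective_index x := (σ.injective_index x).comp f.injective

def roundRobinPartner {m : ℕ} (r : ZMod m) : Option (ZMod m) → Option (ZMod m)
  | none => some r
  | some x => if x = r then none else some (2 * r - x)

/-- For odd `m`, `x ↦ 2r - x` fixes only `r` because `2` is a unit. -/
def roundRobin (m : ℕ) (hm : Odd m) : PartialOneFactorization (ZMod m) (Option (ZMod m)) where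
  toFun := roundRobinPartner
  involutive r x := by
    rcases x with _ | x
    · simp [roundRobinPartner]
    · by_cases hx : x = r
      · simp [roundRobinPartner, hx]
      · have : 2 * r - x ≠ r := fun h => hx (by linear_combination -h)
        simp [roundRobinPartner, hx, this]
  ne_self r x := by
    rcases x with _ | x
    · simp [roundRobinPartner]
    · by_cases hx : x = r
      · simp [roundRobinPartner, hx]
      · simp only [roundRobinPartner, hx, if_false, ne_eq, Option.some.injEq]
        intro h
        exact hx ((ZMod.isUnit_two_of_odd hm).mul_left_cancel (by linear_combination -h))
  injective_index x r s h := by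
    rcases x with _ | x
    · simpa [roundRobinPartner] using h
    · simp only [roundRobinPartner] at h
      split_ifs at h with hr hs hs
      · exact hr.symm.trans hs
      · exact (ZMod.isUnit_two_of_odd hm).mul_left_cancel (by simpa using h)

theorem nonempty_of_card_lt [Fintype ι] [Fintype V] (hV : Even (Fintype.card V))
    (h : Fintype.card ι < Fintype.card V) : Nonempty (PartialOneFactorization ι V) := by
  obtain ⟨m, hm⟩ : ∃ m, Fintype.card V = m + 1 :=
    ⟨_, (Nat.succ_pred_eq_of_pos (by omega)).symm⟩
  have hodd : Odd m := by
    rw [hm] at hV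
    exact Nat.not_even_iff_odd.mp (Nat.even_add_one.mp hV)
  have : NeZero m := ⟨hodd.pos.ne'⟩
  obtain ⟨f⟩ := Embedding.nonempty_of_card_le (α := ι) (β := ZMod m)
    (by rw [ZMod.card]; omega)
  exact ⟨((roundRobin m hodd).comp f).map (Fintype.equivOfCardEq (by simp [hm]))⟩

end PartialOneFactorization

theorem stmt16 (n k : ℕ) (hn : Even n) (h2 : 2 ≤ n) (hk : k ≤ n - 1) :
    IsLeast { m | ∃ G : SimpleGraph (Fin n), G.mp = k ∧ G.edgeSet.ncard = m }
      (n * k / 2) := by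
  classical
  have hV : Even (Fintype.card (Fin n)) := by simpa using hn
  constructor
  · obtain ⟨σ⟩ := PartialOneFactorization.nonempty_of_card_lt (ι := Fin k) hV
      (by simp only [Fintype.card_fin]; omega)
    have : Nonempty (Fin n) := ⟨⟨0, by omega⟩⟩
    have hE := σ.two_mul_card_edgeFinset_graph
    refine ⟨σ.graph, by simpa using σ.mp_graph hV, ?_⟩
    rw [← coe_edgeFinset, Set.ncard_coe_finset]
    simp only [Fintype.card_fin] at hE
    omega
  · rintro _ ⟨G, rfl, rfl⟩
    have hE := G.card_mul_mp_le hV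
    rw [← coe_edgeFinset, Set.ncard_coe_finset]
    simp only [Fintype.card_fin] at hE
    omega
end

section
/- For odd n ≥ 5 and 4 ≤ k ≤ 2n − 6, every graph G on n vertices with mp(G) = k has at least n(n−1)k/(4n−6) edges. -/
open SimpleGraph Finset

/-!
Deleting every edge at two distinct vertices `u`, `v` isolates both of them, and no perfect
or almost-perfect matching can miss two vertices; hence `mp G ≤ deg u + deg v`, with one to
spare when `uv` is an edge, which is counted twice. Summing over ordered pairs `u ≠ v` gives
`n (n - 1) mp G + 2 |E| ≤ 4 (n - 1) |E|`, since every degree occurs `2 (n - 1)` times.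
-/

namespace SimpleGraph

variable {V : Type*}

theorem not_hasGoodMatching_of_isolated (G : SimpleGraph V) {u v : V} (huv : u ≠ v)
    (hu : ∀ w, ¬ G.Adj u w) (hv : ∀ w, ¬ G.Adj v w) : ¬ G.HasGoodMatching := by
  have uncovered :
      ∀ M : G.Subgraph, M.IsMatching → ∀ x ∈ M.verts, x ≠ u ∧ x ≠ v := by
    intro M hM x hx
    obtain ⟨w, hw, -⟩ := hM hx
    constructor <;> rintro rfl
    exacts [hu w (M.adj_sub hw), hv w (M.adj_sub hw)]
  rintro (⟨M, hM, hspan⟩ | ⟨M, hM, x, hx⟩)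
  · exact (uncovered M hM u (hspan u)).1 rfl
  · by_cases hux : u = x
    · subst hux
      exact (uncovered M hM v (by simpa [hx] using huv.symm)).2 rfl
    · exact (uncovered M hM u (by simpa [hx] using hux)).1 rfl

theorem not_adj_deleteEdges_of_incidenceSet_subset (G : SimpleGraph V) {u : V}
    {s : Set (Sym2 V)} (hs : G.incidenceSet u ⊆ s) (w : V) : ¬ (G.deleteEdges s).Adj u w := by
  rw [deleteEdges_adj]
  exact fun ⟨hadj, hnot⟩ => hnot (hs ((G.mem_incidenceSet u w).2 hadj))

variable [Fintype V] (G : SimpleGraph V) [DecidableRel G.Adj]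

section DecidableEq

variable [DecidableEq V]

theorem mp_le_card_incidenceFinset_union {u v : V} (huv : u ≠ v) :
    G.mp ≤ #(G.incidenceFinset u ∪ G.incidenceFinset v) := by
  refine Nat.sInf_le ⟨_, ?_, rfl, ?_⟩
  · rw [coe_union, coe_incidenceFinset, coe_incidenceFinset]
    exact Set.union_subset (G.incidenceSet_subset u) (G.incidenceSet_subset v)
  · rw [coe_union, coe_incidenceFinset, coe_incidenceFinset]
    exact not_hasGoodMatching_of_isolated _ huv
      (G.not_adj_deleteEdges_of_incidenceSet_subset Set.subset_union_left)
      (G.not_adj_deleteEdges_of_incidenceSet_subset Set.subset_union_right)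

theorem card_incidenceFinset_inter {u v : V} (huv : u ≠ v) :
    #(G.incidenceFinset u ∩ G.incidenceFinset v) = if G.Adj u v then 1 else 0 := by
  by_cases hadj : G.Adj u v
  · have : G.incidenceFinset u ∩ G.incidenceFinset v = {s(u, v)} := by
      rw [← coe_inj, coe_inter, coe_incidenceFinset, coe_incidenceFinset,
        G.incidenceSet_inter_incidenceSet_of_adj hadj, coe_singleton]
    simp [this, hadj]
  · have : G.incidenceFinset u ∩ G.incidenceFinset v = ∅ := by
      rw [← coe_inj, coe_inter, coe_incidenceFinset, coe_incidenceFinset,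
        G.incidenceSet_inter_incidenceSet_of_not_adj hadj huv, coe_empty]
    simp [this, hadj]

theorem mp_add_ite_adj_le_degree_add_degree {u v : V} (huv : u ≠ v) :
    G.mp + (if G.Adj u v then 1 else 0) ≤ G.degree u + G.degree v := by
  rw [← card_incidenceFinset_inter G huv, ← card_incidenceFinset_eq_degree,
    ← card_incidenceFinset_eq_degree, ← card_union_add_card_inter]
  exact Nat.add_le_add_right (G.mp_le_card_incidenceFinset_union huv) _

theorem card_sub_one_mul_mp_add_le (u : V) :
    (Fintype.card V - 1) * G.mp + 2 * G.degree u
      ≤ (Fintype.card V - 1) * G.degree u + 2 * #G.edgeFinset := by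
  have hcard : #(univ.erase u) = Fintype.card V - 1 := by
    rw [card_erase_of_mem (mem_univ u), card_univ]
  have hdeg : ∑ v ∈ univ.erase u, (if G.Adj u v then 1 else 0) = G.degree u := by
    rw [sum_erase _ (by simp), sum_boole, Nat.cast_id, ← neighborFinset_eq_filter,
      card_neighborFinset_eq_degree]
  have hrest : G.degree u + ∑ v ∈ univ.erase u, G.degree v = 2 * #G.edgeFinset := by
    rw [add_sum_erase univ (fun v => G.degree v) (mem_univ u), sum_degrees_eq_twice_card_edges]
  have key : ∑ v ∈ univ.erase u, (G.mp + if G.Adj u v then 1 else 0)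
      ≤ ∑ v ∈ univ.erase u, (G.degree u + G.degree v) :=
    sum_le_sum fun v hv => G.mp_add_ite_adj_le_degree_add_degree (ne_of_mem_erase hv).symm
  rw [sum_add_distrib, sum_add_distrib, sum_const, sum_const, hcard, hdeg, smul_eq_mul,
    smul_eq_mul] at key
  linarith

end DecidableEq

theorem card_mul_card_sub_one_mul_mp_le :
    (Fintype.card V : ℝ) * (Fintype.card V - 1) * G.mp
      ≤ (4 * Fintype.card V - 6) * #G.edgeFinset := by
  classical
  have hvertex (u : V) : ((Fintype.card V : ℝ) - 1) * G.mp + 2 * G.degree u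
      ≤ ((Fintype.card V : ℝ) - 1) * G.degree u + 2 * #G.edgeFinset := by
    have : 1 ≤ Fintype.card V := Fintype.card_pos_iff.2 ⟨u⟩
    exact_mod_cast G.card_sub_one_mul_mp_add_le u
  have hsum := sum_le_sum fun u (_ : u ∈ univ) => hvertex u
  have hdeg : ∑ u, (G.degree u : ℝ) = 2 * #G.edgeFinset := by
    exact_mod_cast G.sum_degrees_eq_twice_card_edges
  simp only [sum_add_distrib, ← mul_sum, sum_const, card_univ, nsmul_eq_mul, hdeg] at hsum
  linarith

end SimpleGraph

theorem stmt17_general (n k : ℕ) (h5 : 5 ≤ n) (G : SimpleGraph (Fin n)) (h : G.mp = k) :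
    (n * (n - 1) * k : ℝ) / (4 * n - 6) ≤ (G.edgeSet.ncard : ℝ) := by
  classical
  have hbound := G.card_mul_card_sub_one_mul_mp_le
  rw [Fintype.card_fin, h] at hbound
  have hpos : (0 : ℝ) < 4 * n - 6 := by
    have : (5 : ℝ) ≤ n := by exact_mod_cast h5
    linarith
  rw [div_le_iff₀ hpos, ← coe_edgeFinset, Set.ncard_coe_finset]
  linarith

theorem stmt17 (n k : ℕ) (hn : Odd n) (h5 : 5 ≤ n) (hk : 4 ≤ k)
    (hk2 : k ≤ 2 * n - 6) (G : SimpleGraph (Fin n)) (h : G.mp = k) :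
    (n * (n - 1) * k : ℝ) / (4 * n - 6) ≤ (G.edgeSet.ncard : ℝ) :=
  stmt17_general n k h5 G h
end
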